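/- Let k ≥ 2 be even, Γ a finite abelian group of order n, and S ⊆ Γ a symmetric set such that R_k(S) = Γ \ (S ∪ {0}) and 0 ∉ (k+1)S. Then Cay(Γ, S) is a C_{k+1}-saturated, |S|-regular graph on n vertices. -/

import Mathlib

/-!
A closed walk in `Cay(Γ, S)` of length `k + 1` has steps in `S` summing to `0`, which
`0 ∉ (k+1)S` forbids. If `x ≠ y` are not adjacent then `x - y ∉ S ∪ {0}`, so
`x - y = s₁ + ⋯ + s_k ∈ R_k(S)`; as no consecutive sub-sum vanishes, the partial sums
`y, y + s₁, …, y + s₁ + ⋯ + s_k = x` are distinct and form a path of length `k`, which the new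
edge `xy` closes to a `(k+1)`-cycle. The neighbourhood of `v` is `v - S`, so the graph is
`|S|`-regular.
-/

open Pointwise

/-- The `m`-fold sumset of `S`. -/
def foldSum {Γ : Type*} [AddCommGroup Γ] (m : ℕ) (S : Set Γ) : Set Γ :=
  {x | ∃ s : Fin m → Γ, (∀ i, s i ∈ S) ∧ ∑ i, s i = x}

/-- `R_m(S)`: sums of `m` elements of `S` admitting an ordering with no
consecutive sub-sum (of length at least two) equal to `0`. -/
def Rset {Γ : Type*} [AddCommGroup Γ] (m : ℕ) (S : Set Γ) : Set Γ :=
  {x | ∃ s : Fin m → Γ, (∀ i, s i ∈ S) ∧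
    (∀ i j : Fin m, i < j → ∑ t ∈ Finset.Icc i j, s t ≠ 0) ∧ ∑ i, s i = x}

/-- The Cayley graph of a symmetric connection set `S`. -/
def cayley {Γ : Type*} [AddCommGroup Γ] (S : Set Γ) : SimpleGraph Γ :=
  SimpleGraph.fromRel (fun g h => g - h ∈ S)

/-- A graph is `d`-regular. -/
def isRegular {V : Type*} (G : SimpleGraph V) (d : ℕ) : Prop :=
  ∀ v, (G.neighborSet v).ncard = d

lemma SimpleGraph.exists_isPath_of_injOn {V : Type*} (G : SimpleGraph V) (p : ℕ → V) {m : ℕ}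
    (hp : Set.InjOn p (Set.Iic m)) (hadj : ∀ i < m, G.Adj (p i) (p (i + 1))) :
    ∃ w : G.Walk (p 0) (p m), w.IsPath ∧ w.length = m := by
  set l := (List.range (m + 1)).map p
  have hne : l ≠ [] := by simp [l]
  have hchain : l.IsChain G.Adj :=
    List.isChain_map_of_isChain p (fun _ _ h => h) ((List.isChain_range _ _).mpr hadj)
  have hnodup : l.Nodup :=
    List.nodup_range.map_on fun a ha b hb => hp (by simpa [Nat.lt_succ_iff] using ha)
      (by simpa [Nat.lt_succ_iff] using hb)
  refine ⟨(Walk.ofSupport l hne hchain).copy (by simp [l]) (by simp [l]), ?_, ?_⟩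
  · rw [Walk.isPath_def, Walk.support_copy, Walk.support_ofSupport]
    exact hnodup
  · simp [l]

lemma SimpleGraph.exists_isCycle_sup_edge {V : Type*} {G : SimpleGraph V} {x y : V}
    (hxy : x ≠ y) (hnadj : ¬ G.Adj x y) {w : G.Walk y x} (hw : w.IsPath) :
    ∃ c : (G ⊔ fromEdgeSet {s(x, y)}).Walk x x, c.IsCycle ∧ c.length = w.length + 1 := by
  have hadj : (G ⊔ fromEdgeSet {s(x, y)}).Adj x y := Or.inr ⟨rfl, hxy⟩
  refine ⟨.cons hadj (w.mapLe le_sup_left), ?_, by simp⟩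
  rw [Walk.cons_isCycle_iff, Walk.edges_mapLe_eq_edges]
  exact ⟨hw.mapLe _, fun he => hnadj (w.adj_of_mem_edges he)⟩

section

variable {Γ : Type*} [AddCommGroup Γ] {S : Set Γ}

lemma zero_mem_foldSum (h : (0 : Γ) ∈ S) (m : ℕ) : (0 : Γ) ∈ foldSum m S :=
  ⟨fun _ => 0, fun _ => h, by simp⟩

lemma zero_mem_foldSum_zero : (0 : Γ) ∈ foldSum 0 S :=
  ⟨Fin.elim0, fun i => i.elim0, by simp⟩

lemma add_mem_foldSum_succ {m : ℕ} {a b : Γ} (ha : a ∈ S) (hb : b ∈ foldSum m S) :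
    a + b ∈ foldSum (m + 1) S := by
  obtain ⟨s, hs, rfl⟩ := hb
  exact ⟨Fin.cons a s, Fin.cases ha hs, Fin.sum_cons a s⟩

lemma sub_mem_of_cayley_adj (hsymm : S = -S) {a b : Γ} (h : (cayley S).Adj a b) : a - b ∈ S := by
  rcases ((SimpleGraph.fromRel_adj _ _ _).mp h).2 with h | h
  · exact h
  · rwa [hsymm, Set.mem_neg, neg_sub]

lemma cayley_adj_of_sub_mem (h0 : (0 : Γ) ∉ S) {a b : Γ} (h : a - b ∈ S) : (cayley S).Adj a b :=
  (SimpleGraph.fromRel_adj _ _ _).mpr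
    ⟨fun hab => h0 (by rwa [hab, sub_self] at h), Or.inl h⟩

lemma neighborSet_cayley (hsymm : S = -S) (h0 : (0 : Γ) ∉ S) (v : Γ) :
    (cayley S).neighborSet v = (v - ·) '' S := by
  ext w
  refine ⟨fun h => ⟨v - w, sub_mem_of_cayley_adj hsymm h, sub_sub_cancel v w⟩, ?_⟩
  rintro ⟨t, ht, rfl⟩
  exact cayley_adj_of_sub_mem h0 (by rwa [sub_sub_cancel])

lemma isRegular_cayley (hsymm : S = -S) (h0 : (0 : Γ) ∉ S) : isRegular (cayley S) S.ncard :=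
  fun v => by
    rw [neighborSet_cayley hsymm h0, Set.ncard_image_of_injective _ sub_right_injective]

lemma sub_mem_foldSum_length (hsymm : S = -S) {u v : Γ} (w : (cayley S).Walk u v) :
    u - v ∈ foldSum w.length S := by
  induction w with
  | nil => simpa using zero_mem_foldSum_zero
  | @cons a b c h _ ih =>
    simpa using add_mem_foldSum_succ (sub_mem_of_cayley_adj hsymm h) ih

lemma length_ne_of_zero_notMem_foldSum (hsymm : S = -S) {m : ℕ} (h0 : (0 : Γ) ∉ foldSum m S)
    {v : Γ} (c : (cayley S).Walk v v) : c.length ≠ m := by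
  rintro rfl
  exact h0 (sub_self v ▸ sub_mem_foldSum_length hsymm c)

lemma exists_seq_of_mem_Rset (h0 : (0 : Γ) ∉ S) {m : ℕ} {x : Γ} (hx : x ∈ Rset m S) :
    ∃ f : ℕ → Γ, (∀ t < m, f t ∈ S) ∧
      (∀ a b, a < b → b ≤ m → ∑ t ∈ Finset.Ico a b, f t ≠ 0) ∧
      ∑ t ∈ Finset.range m, f t = x := by
  obtain ⟨s, hs, hcons, rfl⟩ := hx
  set f : ℕ → Γ := fun t => if h : t < m then s ⟨t, h⟩ else 0
  have hfs : ∀ t : Fin m, f t = s t := fun t => dif_pos t.isLt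
  have hfS : ∀ t < m, f t ∈ S := fun t ht => (hfs ⟨t, ht⟩).symm ▸ hs _
  refine ⟨f, hfS, fun a b hab hbm => ?_, ?_⟩
  -- `Rset` only constrains sums of length at least two; single terms are nonzero as `0 ∉ S`.
  · rcases Nat.lt_or_ge (a + 1) b with hlong | hshort
    · have hIco : Finset.Ico a b =
          (Finset.Icc (⟨a, by omega⟩ : Fin m) ⟨b - 1, by omega⟩).map Fin.valEmbedding := by
        rw [Fin.map_valEmbedding_Icc]
        ext t
        simp only [Finset.mem_Ico, Finset.mem_Icc]
        omega
      rw [hIco, Finset.sum_map]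
      simp only [Fin.valEmbedding_apply, hfs]
      exact hcons _ _ (Fin.mk_lt_mk.mpr (by omega))
    · rw [show b = a + 1 by omega, Nat.Ico_succ_singleton, Finset.sum_singleton]
      exact fun hz => h0 (hz ▸ hfS a (by omega))
  · rw [← Fin.sum_univ_eq_sum_range]
    exact Finset.sum_congr rfl fun t _ => hfs t

lemma injOn_add_sum_range {f : ℕ → Γ} {m : ℕ}
    (hf : ∀ a b, a < b → b ≤ m → ∑ t ∈ Finset.Ico a b, f t ≠ 0) (y : Γ) :
    Set.InjOn (fun j => y + ∑ t ∈ Finset.range j, f t) (Set.Iic m) := by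
  have key : ∀ a b, a < b → b ≤ m →
      y + ∑ t ∈ Finset.range a, f t ≠ y + ∑ t ∈ Finset.range b, f t := by
    intro a b hab hbm heq
    apply hf a b hab hbm
    rw [Finset.sum_Ico_eq_sub _ hab.le, add_left_cancel heq, sub_self]
  intro a ha b hb heq
  rcases lt_trichotomy a b with h | h | h
  · exact absurd heq (key a b h hb)
  · exact h
  · exact absurd heq.symm (key b a h ha)

lemma exists_isPath_cayley_of_sub_mem_Rset (h0 : (0 : Γ) ∉ S) {m : ℕ} {x y : Γ}
    (hxy : x - y ∈ Rset m S) :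
    ∃ w : (cayley S).Walk y x, w.IsPath ∧ w.length = m := by
  obtain ⟨f, hfS, hf, hsum⟩ := exists_seq_of_mem_Rset h0 hxy
  set p : ℕ → Γ := fun j => y + ∑ t ∈ Finset.range j, f t
  have hadj : ∀ i < m, (cayley S).Adj (p i) (p (i + 1)) := fun i hi =>
    (cayley_adj_of_sub_mem h0 (by simpa [p, Finset.sum_range_succ] using hfS i hi)).symm
  obtain ⟨w, hw, hlen⟩ :=
    (cayley S).exists_isPath_of_injOn p (injOn_add_sum_range hf y) hadj
  have hp0 : p 0 = y := by simp [p]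
  have hpm : p m = x := by simp [p, hsum]
  exact ⟨w.copy hp0 hpm, by simpa using hw, by simpa using hlen⟩

end

theorem stmt3_general {Γ : Type*} [AddCommGroup Γ] (k : ℕ) (S : Set Γ) (hsymm : S = -S)
    (hR : Rset k S = (S ∪ {0})ᶜ)
    (h0 : (0 : Γ) ∉ foldSum (k + 1) S) :
    ((∀ (v : Γ) (c : (cayley S).Walk v v), c.IsCycle → c.length ≠ k + 1) ∧
      (∀ x y : Γ, x ≠ y → ¬ (cayley S).Adj x y →
        ∃ (v : Γ) (c : ((cayley S) ⊔ SimpleGraph.fromEdgeSet {s(x, y)}).Walk v v),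
          c.IsCycle ∧ c.length = k + 1)) ∧
    isRegular (cayley S) S.ncard := by
  have h0S : (0 : Γ) ∉ S := fun h => h0 (zero_mem_foldSum h _)
  refine ⟨⟨fun v c _ => length_ne_of_zero_notMem_foldSum hsymm h0 c, ?_⟩,
    isRegular_cayley hsymm h0S⟩
  intro x y hxy hnadj
  have hxyR : x - y ∈ Rset k S := by
    rw [hR, Set.mem_compl_iff, Set.mem_union, Set.mem_singleton_iff, sub_eq_zero, not_or]
    exact ⟨fun h => hnadj (cayley_adj_of_sub_mem h0S h), hxy⟩
  obtain ⟨w, hw, rfl⟩ := exists_isPath_cayley_of_sub_mem_Rset h0S hxyR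
  exact ⟨x, (cayley S).exists_isCycle_sup_edge hxy hnadj hw⟩

theorem stmt3 {Γ : Type*} [AddCommGroup Γ] [Finite Γ] (k n : ℕ) (hk : 2 ≤ k)
    (hke : Even k) (hn : Nat.card Γ = n) (S : Set Γ) (hsymm : S = -S)
    (hR : Rset k S = (S ∪ {0})ᶜ)
    (h0 : (0 : Γ) ∉ foldSum (k + 1) S) :
    ((∀ (v : Γ) (c : (cayley S).Walk v v), c.IsCycle → c.length ≠ k + 1) ∧
      (∀ x y : Γ, x ≠ y → ¬ (cayley S).Adj x y →
        ∃ (v : Γ) (c : ((cayley S) ⊔ SimpleGraph.fromEdgeSet {s(x, y)}).Walk v v),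
          c.IsCycle ∧ c.length = k + 1)) ∧
    isRegular (cayley S) S.ncard :=
  stmt3_general k S hsymm hR h0
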